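/- arXiv:2508.17812 — 5 statements merged into one kernel-verified Lean document; each statement's English description precedes it below -/
import Mathlib

section
/- Let q > 0, μ ∈ ℝ, σ > 0, and d ∈ ℝ with d ≠ 0. Then ∫_0^∞ e^{−qt} (|d|/(σ√(2πt³))) exp(−(d − μt)²/(2σ²t)) dt = exp(μd/σ² − |d| √(2qσ² + μ²)/σ²). -/
/-!
Completing the square, with `R = √(2qσ² + μ²)`, `α = R / (√2 σ)` and `β = |d| / (√2 σ)`,
`e^{-qt} e^{-(d - μt)² / (2σ²t)} = e^{(μd - |d|R) / σ²} e^{-(β - αt)² / t}`, so the integral is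
`e^{(μd - |d|R) / σ²} / √π` times `∫₀^∞ β t^{-3/2} e^{-(β - αt)² / t} dt`.
The substitution `x = α√t - β/√t` maps `(0, ∞)` increasingly onto `ℝ`, with
`e^{-x²} = e^{-(β - αt)² / t}` and `β t^{-3/2} dt = (1 - x / √(x² + 4αβ)) dx`;
the odd part of the new integrand integrates to `0`, leaving the Gaussian integral `√π`.
-/

open Real MeasureTheory Set

theorem Function.Odd.integral_eq_zero {G E : Type*} [MeasurableSpace G] [AddGroup G]
    [MeasurableNeg G] [NormedAddCommGroup E] [NormedSpace ℝ E] (μ : Measure G) [μ.IsNegInvariant]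
    {f : G → E} (hf : f.Odd) : ∫ x, f x ∂μ = 0 := by
  have h := integral_neg_eq_self f μ
  simp only [hf _, integral_neg] at h
  have htwice : (2 : ℝ) • ∫ x, f x ∂μ = 0 := by
    rw [two_smul]
    nth_rewrite 1 [← h]
    exact neg_add_cancel _
  exact (smul_eq_zero.mp htwice).resolve_left two_ne_zero

theorem integral_exp_neg_sq_mul_one_sub_div_sqrt {c : ℝ} (hc : 0 ≤ c) :
    ∫ x, exp (-x ^ 2) * (1 - x / √(x ^ 2 + c)) = √π := by
  have hgauss : Integrable fun x : ℝ => exp (-x ^ 2) := by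
    simpa using integrable_exp_neg_mul_sq one_pos
  have hodd : Integrable fun x : ℝ => exp (-x ^ 2) * (x / √(x ^ 2 + c)) := by
    refine hgauss.mono' (by fun_prop) (.of_forall fun x => ?_)
    rw [norm_mul, norm_of_nonneg (exp_pos _).le]
    refine mul_le_of_le_one_right (exp_pos _).le ?_
    rw [norm_div, norm_of_nonneg (sqrt_nonneg _), Real.norm_eq_abs, ← sqrt_sq_eq_abs]
    exact div_le_one_of_le₀ (sqrt_le_sqrt (by linarith)) (sqrt_nonneg _)
  have hodd_zero : ∫ x, exp (-x ^ 2) * (x / √(x ^ 2 + c)) = 0 :=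
    Function.Odd.integral_eq_zero volume fun x => by simp [neg_div]
  simp only [mul_sub, mul_one]
  rw [integral_sub hgauss hodd, hodd_zero, sub_zero]
  simpa using integral_gaussian 1

section InverseGaussian

variable {α β : ℝ}

theorem hasDerivAt_mul_sqrt_sub_div_sqrt {t : ℝ} (ht : 0 < t) :
    HasDerivAt (fun t => α * √t - β / √t) ((α * √t + β / √t) / (2 * t)) t := by
  have hsqrt : 0 < √t := sqrt_pos.2 ht
  refine (((hasDerivAt_sqrt ht.ne').const_mul α).sub
    ((hasDerivAt_const t β).div (hasDerivAt_sqrt ht.ne') hsqrt.ne')).congr_deriv ?_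
  field_simp
  rw [sq_sqrt ht.le]
  ring

theorem strictMonoOn_mul_sqrt_sub_div_sqrt (hα : 0 < α) (hβ : 0 ≤ β) :
    StrictMonoOn (fun t => α * √t - β / √t) (Ioi 0) := by
  intro s hs t ht hst
  have hs' : 0 < √s := sqrt_pos.2 hs
  have h := sqrt_lt_sqrt (le_of_lt hs) hst
  have : β / √t ≤ β / √s := div_le_div_of_nonneg_left hβ hs' h.le
  dsimp only
  nlinarith

theorem image_mul_sqrt_sub_div_sqrt (hα : 0 < α) (hβ : 0 < β) :
    (fun t => α * √t - β / √t) '' Ioi 0 = univ := by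
  refine eq_univ_of_forall fun x => ?_
  -- the positive root `s` of `α s² - x s - β = 0`, so that `t = s²` solves `α √t - β / √t = x`
  set w := √(x ^ 2 + 4 * α * β)
  have hw : w ^ 2 = x ^ 2 + 4 * α * β := sq_sqrt (by positivity)
  have hxw : 0 < x + w := by nlinarith [sqrt_nonneg (x ^ 2 + 4 * α * β), mul_pos hα hβ]
  have hs : 0 < (x + w) / (2 * α) := by positivity
  refine ⟨((x + w) / (2 * α)) ^ 2, pow_pos hs 2, ?_⟩
  dsimp only
  rw [sqrt_sq hs.le]
  field_simp
  linear_combination hw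

theorem integral_Ioi_inverseGaussian (hα : 0 < α) (hβ : 0 < β) :
    ∫ t in Ioi 0, β / (t * √t) * exp (-(β - α * t) ^ 2 / t) = √π := by
  have hcov := integral_image_eq_integral_abs_deriv_smul measurableSet_Ioi
    (fun t ht => (hasDerivAt_mul_sqrt_sub_div_sqrt ht).hasDerivWithinAt)
    (strictMonoOn_mul_sqrt_sub_div_sqrt hα hβ.le).injOn
    fun x => exp (-x ^ 2) * (1 - x / √(x ^ 2 + 4 * α * β))
  rw [image_mul_sqrt_sub_div_sqrt hα hβ, setIntegral_univ,
    integral_exp_neg_sq_mul_one_sub_div_sqrt (by positivity)] at hcov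
  rw [hcov]
  refine setIntegral_congr_fun measurableSet_Ioi fun t (ht : 0 < t) => ?_
  have hsqrt : 0 < √t := sqrt_pos.2 ht
  have hsum : 0 < α * √t + β / √t := by positivity
  have hroot : √((α * √t - β / √t) ^ 2 + 4 * α * β) = α * √t + β / √t := by
    rw [← sqrt_sq hsum.le]
    congr 1
    field_simp
    ring
  have hexp : (α * √t - β / √t) ^ 2 = (β - α * t) ^ 2 / t := by
    field_simp
    rw [sq_sqrt ht.le]
    ring
  rw [hroot, hexp, smul_eq_mul, abs_of_pos (by positivity)]
  field_simp
  rw [sq_sqrt ht.le]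
  ring

end InverseGaussian

theorem stmt_6 (q μ σ d : ℝ) (hq : 0 < q) (hσ : 0 < σ) (hd : d ≠ 0) :
    ∫ t in Set.Ioi (0:ℝ),
        Real.exp (-q*t) * (|d|/(σ * Real.sqrt (2*Real.pi*t^3)))
          * Real.exp (-(d - μ*t)^2/(2*σ^2*t))
      = Real.exp (μ*d/σ^2 - |d| * Real.sqrt (2*q*σ^2 + μ^2)/σ^2) := by
  set R := √(2 * q * σ ^ 2 + μ ^ 2)
  set C := exp (μ * d / σ ^ 2 - |d| * R / σ ^ 2)
  have hR : R ^ 2 = 2 * q * σ ^ 2 + μ ^ 2 := sq_sqrt (by positivity)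
  have h2 : √2 ^ 2 = 2 := sq_sqrt zero_le_two
  have hα : 0 < R / (√2 * σ) := by positivity
  have hβ : 0 < |d| / (√2 * σ) := by positivity
  have hpointwise : ∀ t ∈ Ioi (0 : ℝ), exp (-q * t) * (|d| / (σ * √(2 * π * t ^ 3)))
      * exp (-(d - μ * t) ^ 2 / (2 * σ ^ 2 * t)) = C / √π * (|d| / (√2 * σ) / (t * √t)
        * exp (-(|d| / (√2 * σ) - R / (√2 * σ) * t) ^ 2 / t)) := by
    intro t (ht : 0 < t)
    have hsqrt : √(2 * π * t ^ 3) = √2 * √π * (t * √t) := by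
      rw [show 2 * π * t ^ 3 = 2 * π * t ^ 2 * t by ring, sqrt_mul (by positivity),
        sqrt_mul (by positivity), sqrt_mul zero_le_two, sqrt_sq ht.le]
      ring
    have hexp : -q * t + -(d - μ * t) ^ 2 / (2 * σ ^ 2 * t)
        = μ * d / σ ^ 2 - |d| * R / σ ^ 2 + -(|d| / (√2 * σ) - R / (√2 * σ) * t) ^ 2 / t := by
      field_simp
      rw [h2]
      linear_combination 2 * t ^ 2 * hR + 2 * sq_abs d
    rw [mul_right_comm, ← exp_add, hexp, exp_add, hsqrt]
    field_simp
    rw [sub_div]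
  rw [setIntegral_congr_fun measurableSet_Ioi hpointwise, integral_const_mul,
    integral_Ioi_inverseGaussian hα hβ]
  field_simp
end

section
/- Let q > 0, μ ∈ ℝ, σ > 0, a < b, x ∈ [a, b], and l = √(2qσ² + μ²)/σ². Define K(z) = (2q/(l σ² sinh((b−a)l))) · e^{μ(z−x)/σ²} · sinh((min(x,z) − a)l) · sinh((b − max(x,z))l) for z ∈ [a, b]. Then ∫_a^b K(z) dz + e^{μ(a−x)/σ²} sinh((b−x)l)/sinh((b−a)l) + e^{μ(b−x)/σ²} sinh((x−a)l)/sinh((b−a)l) = 1. -/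
/-!
Split the integral at `x`: on each side the kernel is a constant times `e^{c(z-x)} sinh(±(z-r)l)`
with `c = μ/σ²`, which has an elementary antiderivative since `c² ≠ l²`. The terms in `c` cancel, and
`sinh((x-a)l + (b-x)l) = sinh((b-a)l)` together with `σ²(l² - c²) = 2q` turns the integral
into `1` minus the two boundary terms.
-/

open MeasureTheory Real

section ExpSinh

variable {c l : ℝ}

theorem hasDerivAt_exp_mul_sinh (hcl : c^2 ≠ l^2) (r x z : ℝ) :
    HasDerivAt (fun z => exp (c*(z-x)) * (c * sinh ((z-r)*l) - l * cosh ((z-r)*l)) / (c^2 - l^2))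
      (exp (c*(z-x)) * sinh ((z-r)*l)) z := by
  have hexp : HasDerivAt (fun z => exp (c*(z-x))) (exp (c*(z-x)) * c) z := by
    simpa using (((hasDerivAt_id z).sub_const x).const_mul c).exp
  have harg : HasDerivAt (fun z => (z-r)*l) l z := by
    simpa using ((hasDerivAt_id z).sub_const r).mul_const l
  refine ((hexp.mul ((harg.sinh.const_mul c).sub (harg.cosh.const_mul l))).div_const _).congr_deriv ?_
  rw [div_eq_iff (sub_ne_zero.mpr hcl)]
  simp only [Pi.sub_apply]
  ring

theorem integral_exp_mul_sinh_sub (hcl : c^2 ≠ l^2) (r x u v : ℝ) :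
    ∫ z in u..v, exp (c*(z-x)) * sinh ((z-r)*l)
      = (exp (c*(v-x)) * (c * sinh ((v-r)*l) - l * cosh ((v-r)*l))
        - exp (c*(u-x)) * (c * sinh ((u-r)*l) - l * cosh ((u-r)*l))) / (c^2 - l^2) := by
  rw [intervalIntegral.integral_eq_sub_of_hasDerivAt
    (fun z _ => hasDerivAt_exp_mul_sinh hcl r x z)
    (Continuous.intervalIntegrable (by fun_prop) _ _), sub_div]

theorem integral_exp_mul_sinh_rsub (hcl : c^2 ≠ l^2) (r x u v : ℝ) :
    ∫ z in u..v, exp (c*(z-x)) * sinh ((r-z)*l)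
      = (exp (c*(v-x)) * (c * sinh ((r-v)*l) + l * cosh ((r-v)*l))
        - exp (c*(u-x)) * (c * sinh ((r-u)*l) + l * cosh ((r-u)*l))) / (c^2 - l^2) := by
  have hflip : ∀ y, (y - r) * -l = (r - y) * l := fun y => by ring
  simpa only [hflip, neg_sq, neg_mul, sub_neg_eq_add] using
    integral_exp_mul_sinh_sub (c := c) (l := -l) (by rwa [neg_sq]) r x u v

end ExpSinh

theorem integral_exp_mul_sinh_min_mul_sinh_max {c l a b x : ℝ} (hcl : c^2 ≠ l^2)
    (hax : a ≤ x) (hxb : x ≤ b) :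
    ∫ z in a..b, exp (c*(z-x)) * sinh ((min x z - a)*l) * sinh ((b - max x z)*l)
      = l * (sinh ((b-a)*l) - exp (c*(a-x)) * sinh ((b-x)*l) - exp (c*(b-x)) * sinh ((x-a)*l))
        / (l^2 - c^2) := by
  have hint (u v : ℝ) : IntervalIntegrable
      (fun z => exp (c*(z-x)) * sinh ((min x z - a)*l) * sinh ((b - max x z)*l)) volume u v :=
    Continuous.intervalIntegrable (by fun_prop) u v
  have hleft : ∫ z in a..x, exp (c*(z-x)) * sinh ((min x z - a)*l) * sinh ((b - max x z)*l)
      = sinh ((b-x)*l) * ∫ z in a..x, exp (c*(z-x)) * sinh ((z-a)*l) := by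
    rw [← intervalIntegral.integral_const_mul]
    refine intervalIntegral.integral_congr fun z hz => ?_
    rw [Set.uIcc_of_le hax] at hz
    simp only [min_eq_right hz.2, max_eq_left hz.2]
    ring
  have hright : ∫ z in x..b, exp (c*(z-x)) * sinh ((min x z - a)*l) * sinh ((b - max x z)*l)
      = sinh ((x-a)*l) * ∫ z in x..b, exp (c*(z-x)) * sinh ((b-z)*l) := by
    rw [← intervalIntegral.integral_const_mul]
    refine intervalIntegral.integral_congr fun z hz => ?_
    rw [Set.uIcc_of_le hxb] at hz
    simp only [min_eq_left hz.1, max_eq_right hz.1]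
    ring
  rw [← intervalIntegral.integral_add_adjacent_intervals (hint a x) (hint x b),
    hleft, hright, integral_exp_mul_sinh_sub hcl, integral_exp_mul_sinh_rsub hcl,
    show (b-a)*l = (x-a)*l + (b-x)*l by ring, sinh_add]
  simp only [sub_self, zero_mul, mul_zero, exp_zero, sinh_zero, cosh_zero]
  have : c^2 - l^2 ≠ 0 := sub_ne_zero.mpr hcl
  have : l^2 - c^2 ≠ 0 := sub_ne_zero.mpr hcl.symm
  field_simp
  ring

theorem stmt_10 (q μ σ a b x : ℝ) (hq : 0 < q) (hσ : 0 < σ)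
    (hab : a < b) (hax : a ≤ x) (hxb : x ≤ b)
    (l : ℝ) (hl : l = Real.sqrt (2*q*σ^2 + μ^2) / σ^2) :
    (∫ z in a..b,
        (2*q/(l * σ^2 * Real.sinh ((b-a)*l))) * Real.exp (μ*(z-x)/σ^2)
          * Real.sinh ((min x z - a)*l) * Real.sinh ((b - max x z)*l))
      + Real.exp (μ*(a-x)/σ^2) * Real.sinh ((b-x)*l) / Real.sinh ((b-a)*l)
      + Real.exp (μ*(b-x)/σ^2) * Real.sinh ((x-a)*l) / Real.sinh ((b-a)*l)
    = 1 := by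
  have hlpos : 0 < l := by rw [hl]; positivity
  have hgap : σ^2 * (l^2 - (μ/σ^2)^2) = 2*q := by
    rw [hl, div_pow, Real.sq_sqrt (by positivity)]
    field_simp
    ring
  have hcl : (μ/σ^2)^2 ≠ l^2 := fun h => by nlinarith
  have hS : 0 < sinh ((b-a)*l) := sinh_pos_iff.mpr (by nlinarith)
  simp only [mul_div_right_comm μ, mul_assoc (2*q/_), intervalIntegral.integral_const_mul]
  rw [integral_exp_mul_sinh_min_mul_sinh_max hcl hax hxb]
  generalize μ/σ^2 = c at hgap hcl ⊢
  have : l^2 - c^2 ≠ 0 := sub_ne_zero.mpr hcl.symm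
  generalize sinh ((b-a)*l) = S at hS ⊢
  rw [← hgap]
  field_simp
  ring
end

section
/- Let μ₀ > 0 > μ₁ and σ₀, σ₁ > 0. With l₁(q) = √(2qσ₁² + μ₁²)/σ₁² and c₁⁺(q) = (δ₁⁻ − δ₀⁻)/(δ₁⁺ + δ₁⁻) where δ_i^± = (√(2qσ_i² + μ_i²) ± μ_i)/σ_i², one has lim_{q→0⁺} 2 l₁(q)(1 − c₁⁺(q))/q = 1/μ₀ − 1/μ₁. -/
/-!
Rationalising, `(√(2qσ² + μ²) - μ) / (σ² q) = 2 / (√(2qσ² + μ²) + μ)`, which removes the `0/0`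
at `q = 0`. After simplifying the algebra, `2 l₁ (1 - c₁⁺) / q` is the sum of two such quotients
(one for `μ₀`, one for `-μ₁`), each continuous at `q = 0` with value `1/μ₀`, resp. `-1/μ₁`.
-/

open Filter Topology

lemma sqrt_sub_div_sq_div_eq {σ μ q : ℝ} (hσ : σ ≠ 0) (hq : q ≠ 0)
    (hnonneg : 0 ≤ 2 * q * σ ^ 2 + μ ^ 2) :
    (Real.sqrt (2 * q * σ ^ 2 + μ ^ 2) - μ) / σ ^ 2 / q
      = 2 / (Real.sqrt (2 * q * σ ^ 2 + μ ^ 2) + μ) := by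
  set a := Real.sqrt (2 * q * σ ^ 2 + μ ^ 2)
  have ha : a ^ 2 = 2 * q * σ ^ 2 + μ ^ 2 := Real.sq_sqrt hnonneg
  have hden : a + μ ≠ 0 := by
    intro h
    have : 2 * q * σ ^ 2 = 0 := by linear_combination -ha + (a - μ) * h
    simp [hσ, hq] at this
  rw [div_div, div_eq_div_iff (by positivity) hden]
  linear_combination ha

lemma tendsto_two_div_sqrt_add {σ μ : ℝ} (hμ : 0 < μ) :
    Tendsto (fun q : ℝ => 2 / (Real.sqrt (2 * q * σ ^ 2 + μ ^ 2) + μ)) (𝓝 0) (𝓝 (1 / μ)) := by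
  have hsqrt : Real.sqrt (2 * 0 * σ ^ 2 + μ ^ 2) = μ := by
    simp [Real.sqrt_sq hμ.le]
  have hcont : ContinuousAt (fun q : ℝ => 2 / (Real.sqrt (2 * q * σ ^ 2 + μ ^ 2) + μ)) 0 :=
    continuousAt_const.div (by fun_prop) (by rw [hsqrt]; positivity)
  convert hcont.tendsto using 2
  rw [hsqrt]
  ring

lemma two_mul_mul_one_sub_div_eq {a μ s d : ℝ} (ha : a ≠ 0) (hs : s ≠ 0) :
    2 * (a / s) * (1 - ((a - μ) / s - d) / ((a + μ) / s + (a - μ) / s)) = (a + μ) / s + d := by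
  rw [← add_div, show a + μ + (a - μ) = 2 * a by ring]
  field_simp
  ring

theorem stmt_14 (μ₀ μ₁ σ₀ σ₁ : ℝ) (h0 : 0 < μ₀) (h1 : μ₁ < 0)
    (hσ0 : 0 < σ₀) (hσ1 : 0 < σ₁) :
    Filter.Tendsto
      (fun q : ℝ =>
        2 * (Real.sqrt (2*q*σ₁^2 + μ₁^2)/σ₁^2)
          * (1 - ((Real.sqrt (2*q*σ₁^2 + μ₁^2) - μ₁)/σ₁^2
                    - (Real.sqrt (2*q*σ₀^2 + μ₀^2) - μ₀)/σ₀^2)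
              / ((Real.sqrt (2*q*σ₁^2 + μ₁^2) + μ₁)/σ₁^2
                    + (Real.sqrt (2*q*σ₁^2 + μ₁^2) - μ₁)/σ₁^2))
          / q)
      (nhdsWithin 0 (Set.Ioi 0)) (nhds (1/μ₀ - 1/μ₁)) := by
  have hlim : Tendsto (fun q : ℝ => 2 / (Real.sqrt (2 * q * σ₁ ^ 2 + μ₁ ^ 2) - μ₁)
      + 2 / (Real.sqrt (2 * q * σ₀ ^ 2 + μ₀ ^ 2) + μ₀)) (𝓝 0) (𝓝 (1 / μ₀ - 1 / μ₁)) := by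
    have h₁ := tendsto_two_div_sqrt_add (σ := σ₁) (neg_pos.mpr h1)
    simp only [neg_sq, ← sub_eq_add_neg] at h₁
    convert h₁.add (tendsto_two_div_sqrt_add (σ := σ₀) h0) using 2
    ring
  refine (hlim.mono_left nhdsWithin_le_nhds).congr' ?_
  filter_upwards [self_mem_nhdsWithin] with q (hq : 0 < q)
  have hσ1' : σ₁ ^ 2 ≠ 0 := by positivity
  rw [two_mul_mul_one_sub_div_eq (Real.sqrt_pos.mpr (by positivity)).ne' hσ1', add_div,
    sqrt_sub_div_sq_div_eq hσ0.ne' hq.ne' (by positivity)]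
  have h₁ := sqrt_sub_div_sq_div_eq (μ := -μ₁) hσ1.ne' hq.ne' (by positivity)
  simp only [neg_sq, sub_neg_eq_add, ← sub_eq_add_neg] at h₁
  rw [h₁]
end

section
/- Let μ₁ > 0 and μ₀ > 0 with σ₀, σ₁ > 0. With c₁⁺(q) = (δ₁⁻ − δ₀⁻)/(δ₁⁺ + δ₁⁻), where δ_i⁻ = (√(2qσ_i² + μ_i²) − μ_i)/σ_i² and δ_i⁺ = (√(2qσ_i² + μ_i²) + μ_i)/σ_i², and l₁(q) = √(2qσ₁² + μ₁²)/σ₁², one has lim_{q→0⁺} −2 l₁(q) c₁⁺(q)/q = 1/μ₀ − 1/μ₁. -/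
open Filter Real Topology

/-!
Since `δ₁⁺ + δ₁⁻ = 2 l₁`, the expression equals `(δ₀⁻(q) - δ₁⁻(q)) / q`. Each `δᵢ⁻` vanishes at
`q = 0`, so `δᵢ⁻(q) / q` is a difference quotient at `0`, and it tends to `(δᵢ⁻)'(0) = 1 / μᵢ`.
-/

lemma hasDerivAt_sqrt_two_mul_mul_sq_add_sq_sub_div {μ σ : ℝ} (hμ : 0 < μ) (hσ : σ ≠ 0) :
    HasDerivAt (fun q : ℝ => (√(2*q*σ^2 + μ^2) - μ)/σ^2) (1/μ) 0 := by
  have hlin : HasDerivAt (fun q : ℝ => 2*q*σ^2 + μ^2) (2*σ^2) 0 := by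
    simpa using ((hasDerivAt_id (0:ℝ)).const_mul 2).mul_const (σ^2) |>.add_const (μ^2)
  have h := ((hlin.sqrt (by positivity)).sub_const μ).div_const (σ^2)
  rwa [show 2*(0:ℝ)*σ^2 + μ^2 = μ^2 by ring, sqrt_sq hμ.le,
    show 2*σ^2 / (2*μ) / σ^2 = 1/μ by field_simp] at h

lemma tendsto_sqrt_two_mul_mul_sq_add_sq_sub_div_div {μ σ : ℝ} (hμ : 0 < μ) (hσ : σ ≠ 0) :
    Tendsto (fun q : ℝ => (√(2*q*σ^2 + μ^2) - μ)/σ^2 / q) (𝓝[≠] 0) (𝓝 (1/μ)) := by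
  convert (hasDerivAt_sqrt_two_mul_mul_sq_add_sq_sub_div hμ hσ).tendsto_slope_zero using 2 with q
  simp [sqrt_sq hμ.le, div_eq_inv_mul]

lemma two_mul_div_mul_div_add_sub {s μ σ : ℝ} (hs : s ≠ 0) (hσ : σ ≠ 0) (x : ℝ) :
    2 * (s/σ^2) * (x / ((s + μ)/σ^2 + (s - μ)/σ^2)) = x := by
  rw [← add_div, add_add_sub_cancel, ← two_mul]
  field_simp

theorem stmt_15 (μ₀ μ₁ σ₀ σ₁ : ℝ) (h0 : 0 < μ₀) (h1 : 0 < μ₁)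
    (hσ0 : 0 < σ₀) (hσ1 : 0 < σ₁) :
    Filter.Tendsto
      (fun q : ℝ =>
        -(2 * (Real.sqrt (2*q*σ₁^2 + μ₁^2)/σ₁^2)
            * (((Real.sqrt (2*q*σ₁^2 + μ₁^2) - μ₁)/σ₁^2
                  - (Real.sqrt (2*q*σ₀^2 + μ₀^2) - μ₀)/σ₀^2)
              / ((Real.sqrt (2*q*σ₁^2 + μ₁^2) + μ₁)/σ₁^2
                  + (Real.sqrt (2*q*σ₁^2 + μ₁^2) - μ₁)/σ₁^2)))
          / q)
      (nhdsWithin 0 (Set.Ioi 0)) (nhds (1/μ₀ - 1/μ₁)) := by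
  have hlim := ((tendsto_sqrt_two_mul_mul_sq_add_sq_sub_div_div h0 hσ0.ne').sub
    (tendsto_sqrt_two_mul_mul_sq_add_sq_sub_div_div h1 hσ1.ne')).mono_left (nhdsGT_le_nhdsNE 0)
  refine hlim.congr' ?_
  filter_upwards [self_mem_nhdsWithin] with q (hq : 0 < q)
  have hs : √(2*q*σ₁^2 + μ₁^2) ≠ 0 := (sqrt_pos.2 (by positivity)).ne'
  rw [two_mul_div_mul_div_add_sub hs hσ1.ne', neg_sub]
  exact (sub_div _ _ _).symm
end

section
/- Let μ₀ < 0 < μ₁, σ₀, σ₁ > 0, a ∈ ℝ, and set D = μ₀/σ₀² − μ₁/σ₁² (< 0). Define h : ℝ → ℝ by h(y) = 1 + (μ₁/σ₁²)/D · e^{2μ₀(a−y)/σ₀²} for y ≤ a, and h(y) = (μ₀/σ₀²)/D · e^{−2μ₁(y−a)/σ₁²} for y > a. Then: (i) h is continuous on ℝ and differentiable on ℝ with continuous derivative, the one-sided derivatives at a agreeing; (ii) on (−∞, a), μ₀ h′(y) + (σ₀²/2) h″(y) = 0, and on (a, ∞), μ₁ h′(y) + (σ₁²/2) h″(y) = 0;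 (iii) lim_{y→−∞} h(y) = 1 and lim_{y→+∞} h(y) = 0; (iv) 0 ≤ h(y) ≤ 1 for all y. -/
/-!
Below `a` the function is `1 + c₀ e^{κ₀ (y - a)}` and above `a` it is `c₁ e^{κ₁ (y - a)}`, with
`κᵢ = -2 μᵢ / σᵢ²`; each exponential is killed by `μᵢ ∂ + (σᵢ²/2) ∂²`. Writing `p = μ₀/σ₀²`,
`q = μ₁/σ₁²`, the constants `c₀ = q/(p - q)`, `c₁ = p/(p - q)` are exactly those that make the
values (`1 + c₀ = c₁`) and the slopes (`-2p c₀ = -2q c₁`) agree at `a`, so the glued function is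
`C¹`. Since `κ₀ > 0 > κ₁`, each exponential lies in `(0, 1]` on its own half-line and tends to `0`
at the far end, so `h` is a convex combination of its values at `a` and at infinity, all in `[0, 1]`.
-/

open Set Filter Topology Real

noncomputable def affineExp (A B κ a : ℝ) : ℝ → ℝ := fun y => A + B * exp (κ * (y - a))

section affineExp

variable {A B κ a : ℝ}

theorem hasDerivAt_affineExp (y : ℝ) :
    HasDerivAt (affineExp A B κ a) (affineExp 0 (B * κ) κ a y) y := by
  have hlin : HasDerivAt (fun y => κ * (y - a)) κ y := by
    simpa using ((hasDerivAt_id y).sub_const a).const_mul κ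
  exact ((hlin.exp.const_mul B).const_add A).congr_deriv (by simp only [affineExp]; ring)

theorem deriv_affineExp : deriv (affineExp A B κ a) = affineExp 0 (B * κ) κ a :=
  funext fun y => (hasDerivAt_affineExp y).deriv

theorem continuous_affineExp : Continuous (affineExp A B κ a) := by
  unfold affineExp
  fun_prop

theorem affineExp_self : affineExp A B κ a a = A + B := by
  simp [affineExp]

theorem affineExp_ode {μ σ : ℝ} (hσ : σ ≠ 0) (y : ℝ) :
    μ * deriv (affineExp A B (-2 * (μ / σ ^ 2)) a) y
      + σ ^ 2 / 2 * deriv (deriv (affineExp A B (-2 * (μ / σ ^ 2)) a)) y = 0 := by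
  simp only [deriv_affineExp, affineExp]
  field_simp
  ring

theorem tendsto_affineExp_atTop (hκ : κ < 0) : Tendsto (affineExp A B κ a) atTop (𝓝 A) := by
  have hlin : Tendsto (fun y => κ * (y - a)) atTop atBot :=
    (tendsto_atTop_add_const_right _ (-a) tendsto_id).const_mul_atTop_of_neg hκ
  have := ((tendsto_exp_atBot.comp hlin).const_mul B).const_add A
  rwa [mul_zero, add_zero] at this

theorem tendsto_affineExp_atBot (hκ : 0 < κ) : Tendsto (affineExp A B κ a) atBot (𝓝 A) := by
  have hlin : Tendsto (fun y => κ * (y - a)) atBot atBot :=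
    (tendsto_atBot_add_const_right _ (-a) tendsto_id).const_mul_atBot hκ
  have := ((tendsto_exp_atBot.comp hlin).const_mul B).const_add A
  rwa [mul_zero, add_zero] at this

theorem affineExp_mem_Icc {y : ℝ} (hA : A ∈ Icc (0 : ℝ) 1) (hAB : A + B ∈ Icc (0 : ℝ) 1)
    (hy : κ * (y - a) ≤ 0) : affineExp A B κ a y ∈ Icc (0 : ℝ) 1 := by
  set E := exp (κ * (y - a))
  have hE : E ≤ 1 := exp_le_one_iff.mpr hy
  convert convex_Icc (0 : ℝ) 1 hA hAB (sub_nonneg.mpr hE) (exp_pos _).le (sub_add_cancel 1 E)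
    using 1
  simp only [affineExp, smul_eq_mul]
  ring

end affineExp

section Gluing

variable {f g f' g' : ℝ → ℝ} {a : ℝ}

theorem ite_le_eventuallyEq_left {y : ℝ} (hy : y < a) :
    (fun x => if x ≤ a then f x else g x) =ᶠ[𝓝 y] f := by
  filter_upwards [Iio_mem_nhds hy] with x hx
  simp [(mem_Iio.mp hx).le]

theorem ite_le_eventuallyEq_right {y : ℝ} (hy : a < y) :
    (fun x => if x ≤ a then f x else g x) =ᶠ[𝓝 y] g := by
  filter_upwards [Ioi_mem_nhds hy] with x hx
  simp [not_le.mpr (mem_Ioi.mp hx)]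

theorem ite_le_eventuallyEq_atBot : (fun x => if x ≤ a then f x else g x) =ᶠ[atBot] f := by
  filter_upwards [eventually_le_atBot a] with x hx
  simp [hx]

theorem ite_le_eventuallyEq_atTop : (fun x => if x ≤ a then f x else g x) =ᶠ[atTop] g := by
  filter_upwards [eventually_gt_atTop a] with x hx
  simp [not_le.mpr hx]

theorem hasDerivAt_ite_le (hf : ∀ y ≤ a, HasDerivAt f (f' y) y)
    (hg : ∀ y, a ≤ y → HasDerivAt g (g' y) y) (hfg : f a = g a) (hfg' : f' a = g' a) (y : ℝ) :
    HasDerivAt (fun x => if x ≤ a then f x else g x) (if y ≤ a then f' y else g' y) y := by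
  rcases lt_trichotomy y a with hy | rfl | hy
  · simpa [hy.le] using (hf y hy.le).congr_of_eventuallyEq (ite_le_eventuallyEq_left hy)
  · have hleft : HasDerivWithinAt (fun x => if x ≤ y then f x else g x) (f' y) (Iic y) y :=
      (hf y le_rfl).hasDerivWithinAt.congr (fun x hx => if_pos hx) (if_pos le_rfl)
    have hright : HasDerivWithinAt (fun x => if x ≤ y then f x else g x) (f' y) (Ici y) y := by
      refine hfg' ▸ (hg y le_rfl).hasDerivWithinAt.congr (fun x hx => ?_) (by simp [hfg])
      rcases (mem_Ici.mp hx).eq_or_lt with rfl | hlt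
      · simp [hfg]
      · simp [not_le.mpr hlt]
    simpa [Iic_union_Ici] using hleft.union hright
  · simpa [not_le.mpr hy] using (hg y hy.le).congr_of_eventuallyEq (ite_le_eventuallyEq_right hy)

end Gluing

theorem div_sub_mem_Icc {p q : ℝ} (hp : p ≤ 0) (hq : 0 ≤ q) : p / (p - q) ∈ Icc (0 : ℝ) 1 := by
  rcases (sub_nonpos.mpr (hp.trans hq)).eq_or_lt with hpq | hpq
  · simp [hpq]
  · exact ⟨div_nonneg_of_nonpos hp hpq.le, (div_le_one_of_neg hpq).mpr (by linarith)⟩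

theorem one_add_div_sub {p q : ℝ} (hpq : p ≠ q) : 1 + q / (p - q) = p / (p - q) := by
  field_simp [sub_ne_zero.mpr hpq]
  ring

theorem stmt_17 (μ₀ μ₁ σ₀ σ₁ a : ℝ) (h0 : μ₀ < 0) (h1 : 0 < μ₁)
    (hσ0 : 0 < σ₀) (hσ1 : 0 < σ₁)
    (D : ℝ) (hD : D = μ₀/σ₀^2 - μ₁/σ₁^2)
    (h : ℝ → ℝ)
    (hh : ∀ y, h y = if y ≤ a then
        1 + (μ₁/σ₁^2)/D * Real.exp (2*μ₀*(a-y)/σ₀^2)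
      else
        (μ₀/σ₀^2)/D * Real.exp (-2*μ₁*(y-a)/σ₁^2)) :
    Continuous h ∧ Differentiable ℝ h ∧ Continuous (deriv h) ∧
    derivWithin h (Set.Iic a) a = derivWithin h (Set.Ici a) a ∧
    (∀ y, y < a → μ₀ * deriv h y + σ₀^2/2 * deriv (deriv h) y = 0) ∧
    (∀ y, a < y → μ₁ * deriv h y + σ₁^2/2 * deriv (deriv h) y = 0) ∧
    Filter.Tendsto h Filter.atBot (nhds 1) ∧
    Filter.Tendsto h Filter.atTop (nhds 0) ∧
    (∀ y, 0 ≤ h y ∧ h y ≤ 1) := by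
  set p := μ₀ / σ₀ ^ 2
  set q := μ₁ / σ₁ ^ 2
  have hp : p < 0 := div_neg_of_neg_of_pos h0 (by positivity)
  have hq : 0 < q := div_pos h1 (by positivity)
  have hc₁ := div_sub_mem_Icc hp.le hq.le
  have hc := one_add_div_sub (hp.trans hq).ne
  subst hD
  set f₀ := affineExp 1 (q / (p - q)) (-2 * p) a
  set f₁ := affineExp 0 (p / (p - q)) (-2 * q) a
  obtain rfl : h = fun y => if y ≤ a then f₀ y else f₁ y := by
    funext y
    rw [hh y]
    simp only [f₀, f₁, affineExp, p, q]
    split_ifs <;> ring_nf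
  have hderiv := hasDerivAt_ite_le (f := f₀) (g := f₁) (a := a) (fun y _ => hasDerivAt_affineExp y)
    (fun y _ => hasDerivAt_affineExp y) (by simp only [f₀, f₁, affineExp_self, hc, zero_add])
    (by simp only [affineExp_self]; ring)
  have hdiff : Differentiable ℝ _ := fun y => (hderiv y).differentiableAt
  refine ⟨hdiff.continuous, hdiff, ?_, ?_, fun y hy => ?_, fun y hy => ?_,
    (tendsto_affineExp_atBot (by linarith)).congr' ite_le_eventuallyEq_atBot.symm,
    (tendsto_affineExp_atTop (by linarith)).congr' ite_le_eventuallyEq_atTop.symm, fun y => ?_⟩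
  · rw [funext fun y => (hderiv y).deriv]
    exact continuous_affineExp.if_le continuous_affineExp continuous_id continuous_const
      fun y hy => by simp only [hy, affineExp_self]; ring
  · rw [(hdiff a).derivWithin (uniqueDiffOn_Iic a a self_mem_Iic),
      (hdiff a).derivWithin (uniqueDiffOn_Ici a a self_mem_Ici)]
  · rw [(ite_le_eventuallyEq_left hy).deriv_eq, (ite_le_eventuallyEq_left hy).deriv.deriv_eq]
    exact affineExp_ode hσ0.ne' y
  · rw [(ite_le_eventuallyEq_right hy).deriv_eq, (ite_le_eventuallyEq_right hy).deriv.deriv_eq]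
    exact affineExp_ode hσ1.ne' y
  · show (if y ≤ a then f₀ y else f₁ y) ∈ Icc (0 : ℝ) 1
    split_ifs with hy
    · exact affineExp_mem_Icc (by simp) (hc ▸ hc₁) (by nlinarith)
    · exact affineExp_mem_Icc (by simp) (by simpa using hc₁) (by nlinarith)
end
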